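/- Let p < 0 and T an invertible bounded linear operator on a complex Hilbert space H. Then the map φ_{p,T}(A) = f_p((I + (TT*)⁻¹)^{1/2}(I − (I + T A T*)⁻¹)(I + (TT*)⁻¹)^{1/2}) is an order automorphism of the effect algebra [0, I]. -/

import Mathlib

set_option synthInstance.maxHeartbeats 1000000
set_option maxHeartbeats 1000000

/-- The scalar function `f_p(x) = x / (p x + 1 - p)`. -/
noncomputable def fScalar (p x : ℝ) : ℝ := x / (p * x + 1 - p)

/-- `f_p` applied to an operator via the continuous functional calculus. -/
noncomputable def fOp (p : ℝ) {H : Type*} [NormedAddCommGroup H] [InnerProductSpace ℂ H]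
    [CompleteSpace H] (A : H →L[ℂ] H) : H →L[ℂ] H :=
  cfc (fun x : ℝ => x / (p * x + 1 - p)) A

/-! The map is a composite of four order isomorphisms between operator intervals:
* `A ↦ T A T*`, from `[0, I]` onto `[0, R]` with `R = T T*`;
* `X ↦ I − (I + X)⁻¹`, from `[0, R]` onto `[0, D]` with `D = I − (I + R)⁻¹`, monotone in both
  directions because inversion is antitone on strictly positive operators;
* `Y ↦ S Y S`, from `[0, D]` onto `[0, I]`, because `S² = I + R⁻¹ = D⁻¹`;
* `f_p` on `[0, I]`, whose inverse is `f_{p/(p-1)}` and which is operator monotone for `p < 1`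
  because `f_p(x) = 1/p − ((1 − p)/p) (p x + 1 − p)⁻¹`. -/

open Set
open scoped Ring

def OrderIsoOn {α β : Type*} [LE α] [LE β] (f : α → β) (s : Set α) (t : Set β) : Prop :=
  BijOn f s t ∧ ∀ a ∈ s, ∀ b ∈ s, a ≤ b ↔ f a ≤ f b

section OrderIsoOn

variable {α β γ : Type*} {f : α → β} {s : Set α} {t : Set β}

theorem OrderIsoOn.comp [LE α] [LE β] [LE γ] {g : β → γ} {u : Set γ} (hg : OrderIsoOn g t u)
    (hf : OrderIsoOn f s t) : OrderIsoOn (g ∘ f) s u :=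
  ⟨hg.1.comp hf.1, fun a ha b hb =>
    (hf.2 a ha b hb).trans (hg.2 _ (hf.1.mapsTo ha) _ (hf.1.mapsTo hb))⟩

theorem Set.InvOn.orderIsoOn [Preorder α] [Preorder β] {g : β → α} (h : InvOn g f s t)
    (hf : MapsTo f s t) (hg : MapsTo g t s) (hf_mono : MonotoneOn f s)
    (hg_mono : MonotoneOn g t) : OrderIsoOn f s t :=
  ⟨h.bijOn hf hg, fun a ha b hb => ⟨fun hab => hf_mono ha hb hab, fun hab => by
    simpa only [h.1 ha, h.1 hb] using hg_mono (hf ha) (hf hb) hab⟩⟩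

theorem OrderIso.orderIsoOn_Icc [Preorder α] [Preorder β] (e : α ≃o β) (a b : α) :
    OrderIsoOn e (Icc a b) (Icc (e a) (e b)) :=
  ⟨e.image_Icc a b ▸ e.injective.injOn.bijOn_image, fun _ _ _ _ => e.le_iff_le.symm⟩

end OrderIsoOn

section StarConj

variable {R : Type*} [Ring R] [StarRing R] [PartialOrder R] [StarOrderedRing R]

def Units.starConjOrderIso (u : Rˣ) : R ≃o R where
  toFun a := u * a * star (u : R)
  invFun a := ↑u⁻¹ * a * star (↑u⁻¹ : R)
  left_inv a := by simp [mul_assoc, ← star_mul]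
  right_inv a := by simp [mul_assoc, ← star_mul]
  map_rel_iff' {a b} := by
    change (u : R) * a * star (u : R) ≤ u * b * star (u : R) ↔ a ≤ b
    rw [← sub_nonneg, ← sub_mul, ← mul_sub, u.isUnit.star_right_conjugate_nonneg_iff, sub_nonneg]

theorem orderIsoOn_mul_mul_star {t : R} (ht : IsUnit t) (a b : R) :
    OrderIsoOn (fun x => t * x * star t) (Icc a b) (Icc (t * a * star t) (t * b * star t)) :=
  ht.unit.starConjOrderIso.orderIsoOn_Icc a b

end StarConj

theorem Ring.one_sub_inverse_one_add {R : Type*} [Ring R] {r : R} (hr : IsUnit r)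
    (hr' : IsUnit (1 + r)) : 1 - (1 + r)⁻¹ʳ = (1 + r⁻¹ʳ)⁻¹ʳ := by
  have h : 1 + r⁻¹ʳ = r⁻¹ʳ * (1 + r) := by
    rw [mul_add, mul_one, Ring.inverse_mul_cancel _ hr, add_comm]
  rw [h, eq_comm, ← mul_one (r⁻¹ʳ * (1 + r))⁻¹ʳ,
    Ring.inverse_mul_eq_iff_eq_mul _ _ _ (hr.ringInverse.mul hr'), mul_sub, mul_one,
    Ring.mul_inverse_cancel_right _ _ hr', mul_add, mul_one, Ring.inverse_mul_cancel _ hr,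
    add_sub_cancel_left]

section Scalar

variable {p x : ℝ}

theorem fScalar_denom_pos (hp : p < 1) (hx : x ∈ Icc 0 1) : 0 < p * x + 1 - p := by
  obtain ⟨h0, h1⟩ := hx
  rcases le_or_gt p 0 with h | h <;> nlinarith

theorem fScalar_mem_Icc (hp : p < 1) (hx : x ∈ Icc 0 1) : fScalar p x ∈ Icc 0 1 := by
  have hd := fScalar_denom_pos hp hx
  exact ⟨div_nonneg hx.1 hd.le, (div_le_one hd).2 (by nlinarith [hx.2])⟩

theorem fScalar_fScalar (hp : p < 1) (hx : x ∈ Icc 0 1) :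
    fScalar (p / (p - 1)) (fScalar p x) = x := by
  have hd := (fScalar_denom_pos hp hx).ne'
  have hp1 : p - 1 ≠ 0 := sub_ne_zero.2 hp.ne
  have hden : p / (p - 1) * fScalar p x + 1 - p / (p - 1) = (p * x + 1 - p)⁻¹ := by
    unfold fScalar
    field_simp
    ring
  rw [fScalar, hden, div_inv_eq_mul, fScalar, div_mul_cancel₀ _ hd]

theorem continuousOn_fScalar (hp : p < 1) : ContinuousOn (fScalar p) (Icc 0 1) :=
  continuousOn_id.div (by fun_prop) fun _ hx => (fScalar_denom_pos hp hx).ne'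

theorem div_sub_one_lt_one (hp : p < 1) : p / (p - 1) < 1 := by
  rw [div_lt_one_of_neg (sub_neg.2 hp)]
  linarith

theorem div_sub_one_div_div_sub_one (hp : p ≠ 1) : p / (p - 1) / (p / (p - 1) - 1) = p := by
  have hp1 : p - 1 ≠ 0 := sub_ne_zero.2 hp
  field_simp
  ring

end Scalar

section CStarAlgebra

variable {A : Type*} [CStarAlgebra A] [PartialOrder A] [StarOrderedRing A] {p : ℝ}

theorem spectrum_subset_Icc_of_mem_Icc {a : A} (ha : a ∈ Icc 0 1) :
    spectrum ℝ a ⊆ Icc 0 1 := fun x hx =>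
  ⟨spectrum_nonneg_of_nonneg ha.1 hx,
    (le_algebraMap_iff_spectrum_le (ha := .of_nonneg ha.1)).1 (by simpa using ha.2) x hx⟩

theorem cfc_fScalar_mem_Icc (hp : p < 1) {a : A} (ha : a ∈ Icc 0 1) :
    cfc (fScalar p) a ∈ Icc 0 1 :=
  ⟨cfc_nonneg fun _ hx => (fScalar_mem_Icc hp (spectrum_subset_Icc_of_mem_Icc ha hx)).1,
    cfc_le_one _ _ fun _ hx => (fScalar_mem_Icc hp (spectrum_subset_Icc_of_mem_Icc ha hx)).2⟩

theorem cfc_fScalar_cfc_fScalar (hp : p < 1) {a : A} (ha : a ∈ Icc 0 1) :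
    cfc (fScalar (p / (p - 1))) (cfc (fScalar p) a) = a := by
  have hspec := spectrum_subset_Icc_of_mem_Icc ha
  rw [← cfc_comp' _ _ a ((continuousOn_fScalar (div_sub_one_lt_one hp)).mono
      (image_subset_iff.2 fun _ hx => fScalar_mem_Icc hp (hspec hx)))
      ((continuousOn_fScalar hp).mono hspec) (.of_nonneg ha.1),
    cfc_congr fun _ hx => fScalar_fScalar hp (hspec hx), cfc_id' ℝ a (.of_nonneg ha.1)]

theorem cfc_fScalar_eq (hp : p < 1) (hp0 : p ≠ 0) {a : A} (ha : a ∈ Icc 0 1) :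
    cfc (fScalar p) a =
      algebraMap ℝ A p⁻¹ - ((1 - p) / p) • (p • a + algebraMap ℝ A (1 - p))⁻¹ʳ := by
  have hspec := spectrum_subset_Icc_of_mem_Icc ha
  have hden : ∀ x ∈ spectrum ℝ a, p * x + (1 - p) ≠ 0 := fun x hx => by
    linarith [fScalar_denom_pos hp (hspec hx)]
  have hcont : ContinuousOn (fun x => (p * x + (1 - p))⁻¹) (spectrum ℝ a) :=
    (continuous_const.mul continuous_id |>.add continuous_const).continuousOn.inv₀ hden
  calc cfc (fScalar p) a = cfc (fun x => p⁻¹ - (1 - p) / p * (p * x + (1 - p))⁻¹) a := by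
        refine cfc_congr fun x hx => ?_
        have := hden x hx
        rw [fScalar, add_sub_assoc, div_eq_iff this, sub_mul, mul_assoc, inv_mul_cancel₀ this]
        field_simp
        ring
    _ = _ := by
        rw [cfc_sub (fun _ => p⁻¹) (fun x => (1 - p) / p * (p * x + (1 - p))⁻¹) a
            continuousOn_const (continuousOn_const.mul hcont), cfc_const _ a,
          cfc_const_mul _ _ a hcont, cfc_inv _ a hden, cfc_add_const _ _ a, cfc_const_mul_id p a]

theorem monotoneOn_cfc_fScalar (hp : p < 1) :
    MonotoneOn (cfc (fScalar p) : A → A) (Icc 0 1) := by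
  intro a ha b hb hab
  rcases lt_trichotomy p 0 with hneg | rfl | hpos
  · rw [cfc_fScalar_eq hp hneg.ne ha, cfc_fScalar_eq hp hneg.ne hb]
    have hb1 : (1 : A) ≤ p • b + algebraMap ℝ A (1 - p) := by
      calc (1 : A) = p • 1 + algebraMap ℝ A (1 - p) := by
            rw [Algebra.algebraMap_eq_smul_one, ← add_smul, add_sub_cancel, one_smul]
        _ ≤ p • b + algebraMap ℝ A (1 - p) :=
            add_le_add_left (smul_le_smul_of_nonpos_left hb.2 hneg.le) _
    refine sub_le_sub_left (smul_le_smul_of_nonpos_left ?_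
      (div_nonpos_of_nonneg_of_nonpos (sub_nonneg.2 hp.le) hneg.le)) _
    exact CStarAlgebra.ringInverse_le_ringInverse
      (add_le_add_left (smul_le_smul_of_nonpos_left hab hneg.le) _)
      (isStrictlyPositive_one.of_le hb1)
  · have hid : fScalar 0 = id := funext fun x => by simp [fScalar]
    rwa [hid, cfc_id ℝ a (.of_nonneg ha.1), cfc_id ℝ b (.of_nonneg hb.1)]
  · rw [cfc_fScalar_eq hp hpos.ne' ha, cfc_fScalar_eq hp hpos.ne' hb]
    gcongr
    exact (isStrictlyPositive_algebraMap (sub_pos.2 hp)).nonneg_add (smul_nonneg hpos.le ha.1)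

theorem orderIsoOn_cfc_fScalar (hp : p < 1) :
    OrderIsoOn (cfc (fScalar p) : A → A) (Icc 0 1) (Icc 0 1) := by
  have hq := div_sub_one_lt_one hp
  refine InvOn.orderIsoOn (g := cfc (fScalar (p / (p - 1))))
    ⟨fun a ha => cfc_fScalar_cfc_fScalar hp ha, fun b hb => ?_⟩
    (fun a ha => cfc_fScalar_mem_Icc hp ha) (fun b hb => cfc_fScalar_mem_Icc hq hb)
    (monotoneOn_cfc_fScalar hp) (monotoneOn_cfc_fScalar hq)
  have := cfc_fScalar_cfc_fScalar hq hb
  rwa [div_sub_one_div_div_sub_one hp.ne] at this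

theorem orderIsoOn_one_sub_inverse_one_add {c : A} (hc : 0 ≤ c) :
    OrderIsoOn (fun a : A => 1 - (1 + a)⁻¹ʳ) (Icc 0 c) (Icc 0 (1 - (1 + c)⁻¹ʳ)) := by
  have hpos {a : A} (ha : 0 ≤ a) : IsStrictlyPositive (1 + a) :=
    isStrictlyPositive_one.add_nonneg ha
  have hpos' {b : A} (hb : b ≤ 1 - (1 + c)⁻¹ʳ) : IsStrictlyPositive (1 - b) :=
    (hpos hc).ringInverse.of_le (le_sub_comm.1 hb)
  refine InvOn.orderIsoOn (g := fun b => (1 - b)⁻¹ʳ - 1) ⟨fun a ha => ?_, fun b hb => ?_⟩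
    (fun a ha => ⟨?_, ?_⟩) (fun b hb => ⟨?_, ?_⟩) (fun a ha a' _ h => ?_)
    (fun b _ b' hb' h => ?_)
  · simp only [sub_sub_cancel, Ring.inverse_inverse (hpos ha.1).isUnit, add_sub_cancel_left]
  · simp only [add_sub_cancel, Ring.inverse_inverse (hpos' hb.2).isUnit, sub_sub_cancel]
  · simpa using CStarAlgebra.ringInverse_le_ringInverse (le_add_of_nonneg_right ha.1)
      isStrictlyPositive_one
  · exact sub_le_sub_left
      (CStarAlgebra.ringInverse_le_ringInverse (add_le_add_right ha.2 1) (hpos ha.1)) 1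
  · simpa using CStarAlgebra.ringInverse_le_ringInverse (sub_le_self 1 hb.1) (hpos' hb.2)
  · have := CStarAlgebra.ringInverse_le_ringInverse (le_sub_comm.1 hb.2) (hpos hc).ringInverse
    rwa [Ring.inverse_inverse (hpos hc).isUnit, ← sub_le_iff_le_add'] at this
  · exact sub_le_sub_left
      (CStarAlgebra.ringInverse_le_ringInverse (add_le_add_right h 1) (hpos ha.1)) 1
  · exact sub_le_sub_right
      (CStarAlgebra.ringInverse_le_ringInverse (sub_le_sub_left h 1) (hpos' hb'.2)) 1

theorem orderIsoOn_effectMap (hp : p < 1) {t : A} (ht : IsUnit t) :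
    OrderIsoOn (fun a : A => cfc (fScalar p)
      (CFC.sqrt (1 + (t * star t)⁻¹ʳ) * (1 - (1 + t * a * star t)⁻¹ʳ) *
        CFC.sqrt (1 + (t * star t)⁻¹ʳ))) (Icc 0 1) (Icc 0 1) := by
  set r := t * star t
  have hr : IsStrictlyPositive r := (ht.mul ht.star).isStrictlyPositive (mul_star_self_nonneg t)
  set c := 1 + r⁻¹ʳ
  have hc : IsStrictlyPositive c := isStrictlyPositive_one.add_nonneg hr.ringInverse.nonneg
  set S := CFC.sqrt c
  have hS : IsUnit S := CFC.isUnit_sqrt_iff_isStrictlyPositive.2 hc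
  have hSS : S * (1 - (1 + r)⁻¹ʳ) * S = 1 := by
    have := CFC.conjSqrt_ringInverse_self c⁻¹ʳ hc.ringInverse
    rwa [Ring.inverse_inverse hc.isUnit, CFC.conjSqrt_apply,
      ← Ring.one_sub_inverse_one_add hr.isUnit
        (isStrictlyPositive_one.add_nonneg hr.nonneg).isUnit] at this
  have h1 := orderIsoOn_mul_mul_star ht 0 1
  rw [mul_zero, zero_mul, mul_one] at h1
  have h3 := orderIsoOn_mul_mul_star hS 0 (1 - (1 + r)⁻¹ʳ)
  rw [(CFC.sqrt_nonneg c).isSelfAdjoint.star_eq, mul_zero, zero_mul, hSS] at h3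
  exact (orderIsoOn_cfc_fScalar hp).comp
    (h3.comp ((orderIsoOn_one_sub_inverse_one_add hr.nonneg).comp h1))

end CStarAlgebra

theorem stmt_14 {H : Type*} [NormedAddCommGroup H] [InnerProductSpace ℂ H] [CompleteSpace H]
    (p : ℝ) (hp : p < 0) (T : H →L[ℂ] H) (hT : IsUnit T) :
    Set.BijOn (fun A : H →L[ℂ] H =>
        fOp p (CFC.sqrt (1 + Ring.inverse (T * ContinuousLinearMap.adjoint T)) *
          (1 - Ring.inverse (1 + T * A * ContinuousLinearMap.adjoint T)) *
          CFC.sqrt (1 + Ring.inverse (T * ContinuousLinearMap.adjoint T))))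
      {A : H →L[ℂ] H | IsSelfAdjoint A ∧ 0 ≤ A ∧ A ≤ 1} {A : H →L[ℂ] H | IsSelfAdjoint A ∧ 0 ≤ A ∧ A ≤ 1} ∧
    ∀ A ∈ {A : H →L[ℂ] H | IsSelfAdjoint A ∧ 0 ≤ A ∧ A ≤ 1}, ∀ B ∈ {A : H →L[ℂ] H | IsSelfAdjoint A ∧ 0 ≤ A ∧ A ≤ 1},
      (A ≤ B ↔
        fOp p (CFC.sqrt (1 + Ring.inverse (T * ContinuousLinearMap.adjoint T)) *
          (1 - Ring.inverse (1 + T * A * ContinuousLinearMap.adjoint T)) *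
          CFC.sqrt (1 + Ring.inverse (T * ContinuousLinearMap.adjoint T))) ≤
        fOp p (CFC.sqrt (1 + Ring.inverse (T * ContinuousLinearMap.adjoint T)) *
          (1 - Ring.inverse (1 + T * B * ContinuousLinearMap.adjoint T)) *
          CFC.sqrt (1 + Ring.inverse (T * ContinuousLinearMap.adjoint T)))) := by
  have hEffects : {A : H →L[ℂ] H | IsSelfAdjoint A ∧ 0 ≤ A ∧ A ≤ 1} = Icc 0 1 :=
    Set.ext fun A => ⟨fun h => h.2, fun h => ⟨.of_nonneg h.1, h⟩⟩
  rw [hEffects]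
  have h := orderIsoOn_effectMap (hp.trans one_pos) hT
  simp only [ContinuousLinearMap.star_eq_adjoint] at h
  exact h
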